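/- arXiv:0906.3143 — 4 statements merged into one kernel-verified Lean document; each statement's English description precedes it below -/
import Mathlib

section
/- Let β ∈ ℝ, let f : ℝ → ℝ be smooth with f'' = β·f, and let u : ℂ → ℝ be a smooth solution of ∂²u/∂z∂z̄ = -f(u). Then P = ∂³u/∂z³ - (β/2)·(∂u/∂z)³ satisfies the linearized equation ∂²P/∂z∂z̄ + f'(u)·P = 0. -/
open Complex

/-- The Wirtinger derivative ∂/∂z of a function F : ℂ → ℂ. -/
noncomputable def wdz (F : ℂ → ℂ) (z : ℂ) : ℂ :=
  (fderiv ℝ F z 1 - Complex.I * fderiv ℝ F z Complex.I) / 2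

/-- The Wirtinger derivative ∂/∂z̄ of a function F : ℂ → ℂ. -/
noncomputable def wdzb (F : ℂ → ℂ) (z : ℂ) : ℂ :=
  (fderiv ℝ F z 1 + Complex.I * fderiv ℝ F z Complex.I) / 2


open scoped ContDiff

lemma contDiff_wdz {F : ℂ → ℂ} (hF : ContDiff ℝ ∞ F) : ContDiff ℝ ∞ (wdz F) := by
  have h := hF.fderiv_right (m := ∞) (le_of_eq rfl)
  exact (((h.clm_apply contDiff_const).sub
    (contDiff_const.mul (h.clm_apply contDiff_const))).div_const 2)

lemma contDiff_wdzb {F : ℂ → ℂ} (hF : ContDiff ℝ ∞ F) : ContDiff ℝ ∞ (wdzb F) := by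
  have h := hF.fderiv_right (m := ∞) (le_of_eq rfl)
  exact (((h.clm_apply contDiff_const).add
    (contDiff_const.mul (h.clm_apply contDiff_const))).div_const 2)

lemma fderiv_apply_comm {F : ℂ → ℂ} (hF : ContDiff ℝ ∞ F) (z v w : ℂ) :
    fderiv ℝ (fun y => fderiv ℝ F y v) z w = fderiv ℝ (fderiv ℝ F) z w v := by
  have hd : DifferentiableAt ℝ (fderiv ℝ F) z :=
    ((hF.fderiv_right (m := ∞) (le_of_eq rfl)).differentiable (by norm_cast)) z
  have h : HasFDerivAt (fun y => fderiv ℝ F y v)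
      ((ContinuousLinearMap.apply ℝ ℂ v).comp (fderiv ℝ (fderiv ℝ F) z)) z :=
    (ContinuousLinearMap.apply ℝ ℂ v).hasFDerivAt.comp z hd.hasFDerivAt
  rw [h.fderiv]; rfl

lemma fderiv_wdz {F : ℂ → ℂ} (hF : ContDiff ℝ ∞ F) (z w : ℂ) :
    fderiv ℝ (wdz F) z w
      = (fderiv ℝ (fderiv ℝ F) z w 1 - Complex.I * fderiv ℝ (fderiv ℝ F) z w Complex.I) / 2 := by
  have h := hF.fderiv_right (m := ∞) (le_of_eq rfl)
  have h1 : DifferentiableAt ℝ (fun y => fderiv ℝ F y 1) z :=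
    ((h.clm_apply contDiff_const).differentiable (by norm_cast)) z
  have hI : DifferentiableAt ℝ (fun y => fderiv ℝ F y Complex.I) z :=
    ((h.clm_apply contDiff_const).differentiable (by norm_cast)) z
  have e : wdz F = fun y => (2:ℂ)⁻¹ *
      ((fun y => fderiv ℝ F y 1) y - Complex.I * (fun y => fderiv ℝ F y Complex.I) y) := by
    funext y; simp only [wdz]; ring
  rw [e, fderiv_const_mul (h1.fun_sub (hI.const_mul _)), fderiv_fun_sub h1 (hI.const_mul _),
    fderiv_const_mul hI]
  simp only [ContinuousLinearMap.smul_apply, ContinuousLinearMap.sub_apply, smul_eq_mul]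
  rw [fderiv_apply_comm hF z 1 w, fderiv_apply_comm hF z Complex.I w]
  ring

lemma fderiv_wdzb {F : ℂ → ℂ} (hF : ContDiff ℝ ∞ F) (z w : ℂ) :
    fderiv ℝ (wdzb F) z w
      = (fderiv ℝ (fderiv ℝ F) z w 1 + Complex.I * fderiv ℝ (fderiv ℝ F) z w Complex.I) / 2 := by
  have h := hF.fderiv_right (m := ∞) (le_of_eq rfl)
  have h1 : DifferentiableAt ℝ (fun y => fderiv ℝ F y 1) z :=
    ((h.clm_apply contDiff_const).differentiable (by norm_cast)) z
  have hI : DifferentiableAt ℝ (fun y => fderiv ℝ F y Complex.I) z :=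
    ((h.clm_apply contDiff_const).differentiable (by norm_cast)) z
  have e : wdzb F = fun y => (2:ℂ)⁻¹ *
      ((fun y => fderiv ℝ F y 1) y + Complex.I * (fun y => fderiv ℝ F y Complex.I) y) := by
    funext y; simp only [wdzb]; ring
  rw [e, fderiv_const_mul (h1.fun_add (hI.const_mul _)), fderiv_fun_add h1 (hI.const_mul _),
    fderiv_const_mul hI]
  simp only [ContinuousLinearMap.smul_apply, ContinuousLinearMap.add_apply, smul_eq_mul]
  rw [fderiv_apply_comm hF z 1 w, fderiv_apply_comm hF z Complex.I w]
  ring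

lemma wdz_wdzb_comm {F : ℂ → ℂ} (hF : ContDiff ℝ ∞ F) (z : ℂ) :
    wdzb (wdz F) z = wdz (wdzb F) z := by
  have hs : fderiv ℝ (fderiv ℝ F) z 1 Complex.I = fderiv ℝ (fderiv ℝ F) z Complex.I 1 :=
    (hF.contDiffAt.isSymmSndFDerivAt (by simp; exact WithTop.coe_le_coe.mpr le_top)) 1 Complex.I
  simp only [wdzb, wdz, fderiv_wdz hF, fderiv_wdzb hF]
  rw [hs]; ring

lemma wdz_add (F G : ℂ → ℂ) {z : ℂ} (hF : DifferentiableAt ℝ F z)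
    (hG : DifferentiableAt ℝ G z) :
    wdz (fun w => F w + G w) z = wdz F z + wdz G z := by
  simp only [wdz, fderiv_fun_add hF hG, ContinuousLinearMap.add_apply]; ring

lemma wdz_sub (F G : ℂ → ℂ) {z : ℂ} (hF : DifferentiableAt ℝ F z)
    (hG : DifferentiableAt ℝ G z) :
    wdz (fun w => F w - G w) z = wdz F z - wdz G z := by
  simp only [wdz, fderiv_fun_sub hF hG, ContinuousLinearMap.sub_apply]; ring

lemma wdz_neg (F : ℂ → ℂ) (z : ℂ) :
    wdz (fun w => -F w) z = - wdz F z := by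
  simp only [wdz, fderiv_fun_neg, ContinuousLinearMap.neg_apply]; ring

lemma wdz_mul (F G : ℂ → ℂ) {z : ℂ} (hF : DifferentiableAt ℝ F z)
    (hG : DifferentiableAt ℝ G z) :
    wdz (fun w => F w * G w) z = wdz F z * G z + F z * wdz G z := by
  simp only [wdz, fderiv_fun_mul hF hG, ContinuousLinearMap.add_apply,
    ContinuousLinearMap.smul_apply, smul_eq_mul]; ring

lemma wdz_const_mul (c : ℂ) (G : ℂ → ℂ) {z : ℂ} (hG : DifferentiableAt ℝ G z) :
    wdz (fun w => c * G w) z = c * wdz G z := by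
  simp only [wdz, fderiv_const_mul hG, ContinuousLinearMap.smul_apply, smul_eq_mul]; ring

lemma wdzb_sub (F G : ℂ → ℂ) {z : ℂ} (hF : DifferentiableAt ℝ F z)
    (hG : DifferentiableAt ℝ G z) :
    wdzb (fun w => F w - G w) z = wdzb F z - wdzb G z := by
  simp only [wdzb, fderiv_fun_sub hF hG, ContinuousLinearMap.sub_apply]; ring

lemma wdzb_mul (F G : ℂ → ℂ) {z : ℂ} (hF : DifferentiableAt ℝ F z)
    (hG : DifferentiableAt ℝ G z) :
    wdzb (fun w => F w * G w) z = wdzb F z * G z + F z * wdzb G z := by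
  simp only [wdzb, fderiv_fun_mul hF hG, ContinuousLinearMap.add_apply,
    ContinuousLinearMap.smul_apply, smul_eq_mul]; ring

lemma wdzb_const_mul (c : ℂ) (G : ℂ → ℂ) {z : ℂ} (hG : DifferentiableAt ℝ G z) :
    wdzb (fun w => c * G w) z = c * wdzb G z := by
  simp only [wdzb, fderiv_const_mul hG, ContinuousLinearMap.smul_apply, smul_eq_mul]; ring

lemma wdz_comp_ofReal (g : ℝ → ℝ) (u : ℂ → ℝ) {z : ℂ}
    (hg : DifferentiableAt ℝ g (u z)) (hu : DifferentiableAt ℝ u z) :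
    wdz (fun w => ((g (u w) : ℝ) : ℂ)) z
      = ((deriv g (u z) : ℝ) : ℂ) * wdz (fun w => ((u w : ℝ) : ℂ)) z := by
  have hcomp : HasFDerivAt (fun w => ((g (u w) : ℝ) : ℂ))
      (Complex.ofRealCLM.comp ((deriv g (u z)) • (fderiv ℝ u z))) z :=
    Complex.ofRealCLM.hasFDerivAt.comp z
      ((hg.hasDerivAt.comp_hasFDerivAt z hu.hasFDerivAt))
  have hbase : HasFDerivAt (fun w => ((u w : ℝ) : ℂ))
      (Complex.ofRealCLM.comp (fderiv ℝ u z)) z :=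
    Complex.ofRealCLM.hasFDerivAt.comp z hu.hasFDerivAt
  simp only [wdz, hcomp.fderiv, hbase.fderiv, ContinuousLinearMap.coe_comp', Function.comp_apply,
    ContinuousLinearMap.smul_apply, Complex.ofRealCLM_apply, smul_eq_mul, Complex.ofReal_mul]
  ring

/-- If f'' = β·f and u is a smooth solution of u_{zz̄} = -f(u), then the
Pinkall–Sterling Jacobi field P = u_{zzz} - (β/2)·u_z³ satisfies
P_{zz̄} + f'(u)·P = 0. -/
theorem stmt2 (β : ℝ) (f : ℝ → ℝ) (hf : ContDiff ℝ (⊤ : ℕ∞) f)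
    (hode : ∀ t, deriv (deriv f) t = β * f t)
    (u : ℂ → ℝ) (hu : ContDiff ℝ (⊤ : ℕ∞) u)
    (hpde : ∀ z, wdzb (wdz (fun w => (u w : ℂ))) z = -(f (u z) : ℂ)) :
    ∀ z, wdzb (wdz (fun w =>
        wdz (wdz (wdz (fun w' => (u w' : ℂ)))) w
          - (Complex.ofReal (β / 2)) * (wdz (fun w' => (u w' : ℂ)) w) ^ 3)) z
      + (Complex.ofReal (deriv f (u z)))
          * (wdz (wdz (wdz (fun w' => (u w' : ℂ)))) z
              - (Complex.ofReal (β / 2)) * (wdz (fun w' => (u w' : ℂ)) z) ^ 3) = 0 := by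
  intro z
  have hu' : ContDiff ℝ ∞ u := hu.of_le (by simp)
  have hf' : ContDiff ℝ ∞ f := hf.of_le (by simp)
  have hdf : ContDiff ℝ ∞ (deriv f) := (contDiff_infty_iff_deriv.mp hf').2
  set U : ℂ → ℂ := fun w => ((u w : ℝ) : ℂ) with hU_def
  have hU : ContDiff ℝ ∞ U := Complex.ofRealCLM.contDiff.comp hu'
  set u1 : ℂ → ℂ := wdz U with hu1_def
  set u2 : ℂ → ℂ := wdz u1 with hu2_def
  set u3 : ℂ → ℂ := wdz u2 with hu3_def
  have hu1c : ContDiff ℝ ∞ u1 := contDiff_wdz hU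
  have hu2c : ContDiff ℝ ∞ u2 := contDiff_wdz hu1c
  have hu3c : ContDiff ℝ ∞ u3 := contDiff_wdz hu2c
  have hfu : ContDiff ℝ ∞ (fun w => ((f (u w) : ℝ) : ℂ)) :=
    Complex.ofRealCLM.contDiff.comp (hf'.comp hu')
  have hdfu : ContDiff ℝ ∞ (fun w => ((deriv f (u w) : ℝ) : ℂ)) :=
    Complex.ofRealCLM.contDiff.comp (hdf.comp hu')
  have d : ∀ {G : ℂ → ℂ}, ContDiff ℝ ∞ G → ∀ w, DifferentiableAt ℝ G w :=
    fun h w => (h.differentiable (by norm_cast)) w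
  have du : ∀ w : ℂ, DifferentiableAt ℝ u w :=
    fun w => (hu'.differentiable (by norm_cast)) w
  have df : ∀ t : ℝ, DifferentiableAt ℝ f t :=
    fun t => (hf'.differentiable (by norm_cast)) t
  have ddf : ∀ t : ℝ, DifferentiableAt ℝ (deriv f) t :=
    fun t => (hdf.differentiable (by norm_cast)) t
  -- chain rules
  have efu : ∀ w, wdz (fun w' => ((f (u w') : ℝ) : ℂ)) w
      = ((deriv f (u w) : ℝ) : ℂ) * u1 w := by
    intro w
    rw [wdz_comp_ofReal f u (df (u w)) (du w), ← hU_def, ← hu1_def]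
  have edfu : ∀ w, wdz (fun w' => ((deriv f (u w') : ℝ) : ℂ)) w
      = (β : ℂ) * ((f (u w) : ℝ) : ℂ) * u1 w := by
    intro w
    rw [wdz_comp_ofReal (deriv f) u (ddf (u w)) (du w), ← hU_def, ← hu1_def, hode]
    push_cast; ring
  -- step 1 : wdzb u2
  have hwb2 : ∀ w, wdzb u2 w = -(((deriv f (u w) : ℝ) : ℂ) * u1 w) := by
    intro w
    calc wdzb u2 w = wdz (wdzb u1) w := by rw [hu2_def]; exact wdz_wdzb_comm hu1c w
      _ = wdz (fun w' => -((f (u w') : ℝ) : ℂ)) w := by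
            rw [show wdzb u1 = fun w' => -((f (u w') : ℝ) : ℂ) from funext hpde]
      _ = -(wdz (fun w' => ((f (u w') : ℝ) : ℂ)) w) := wdz_neg _ w
      _ = -(((deriv f (u w) : ℝ) : ℂ) * u1 w) := by rw [efu w]
  -- step 2 : wdzb u3
  have hwb3 : ∀ w, wdzb u3 w
      = -((β : ℂ) * ((f (u w) : ℝ) : ℂ) * u1 w * u1 w + ((deriv f (u w) : ℝ) : ℂ) * u2 w) := by
    intro w
    calc wdzb u3 w = wdz (wdzb u2) w := by rw [hu3_def]; exact wdz_wdzb_comm hu2c w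
      _ = wdz (fun w' => -(((deriv f (u w') : ℝ) : ℂ) * u1 w')) w := by
            rw [show wdzb u2 = fun w' => -(((deriv f (u w') : ℝ) : ℂ) * u1 w') from funext hwb2]
      _ = -(wdz (fun w' => ((deriv f (u w') : ℝ) : ℂ) * u1 w') w) := wdz_neg _ w
      _ = -((β : ℂ) * ((f (u w) : ℝ) : ℂ) * u1 w * u1 w + ((deriv f (u w) : ℝ) : ℂ) * u2 w) := by
            rw [wdz_mul _ _ (d hdfu w) (d hu1c w), edfu w, ← hu2_def]
  -- step 3 : wdzb (wdz u3)
  have hwb4 : wdzb (wdz u3) z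
      = -((β : ℂ) * ((deriv f (u z) : ℝ) : ℂ) * u1 z ^ 3
          + 3 * (β : ℂ) * ((f (u z) : ℝ) : ℂ) * u1 z * u2 z
          + ((deriv f (u z) : ℝ) : ℂ) * u3 z) := by
    have hA : ∀ w, DifferentiableAt ℝ
        (fun w' => (β : ℂ) * ((f (u w') : ℝ) : ℂ) * u1 w' * u1 w') w :=
      fun w => (((d (contDiff_const.mul hfu) w).fun_mul (d hu1c w)).fun_mul (d hu1c w))
    have hB : ∀ w, DifferentiableAt ℝ
        (fun w' => ((deriv f (u w') : ℝ) : ℂ) * u2 w') w :=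
      fun w => ((d hdfu w).fun_mul (d hu2c w))
    calc wdzb (wdz u3) z = wdz (wdzb u3) z := wdz_wdzb_comm hu3c z
      _ = wdz (fun w' => -((β : ℂ) * ((f (u w') : ℝ) : ℂ) * u1 w' * u1 w'
            + ((deriv f (u w') : ℝ) : ℂ) * u2 w')) z := by
            rw [show wdzb u3 = fun w' => -((β : ℂ) * ((f (u w') : ℝ) : ℂ) * u1 w' * u1 w'
              + ((deriv f (u w') : ℝ) : ℂ) * u2 w') from funext hwb3]
      _ = -(wdz (fun w' => (β : ℂ) * ((f (u w') : ℝ) : ℂ) * u1 w' * u1 w'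
            + ((deriv f (u w') : ℝ) : ℂ) * u2 w') z) := wdz_neg _ z
      _ = -((β : ℂ) * ((deriv f (u z) : ℝ) : ℂ) * u1 z ^ 3
          + 3 * (β : ℂ) * ((f (u z) : ℝ) : ℂ) * u1 z * u2 z
          + ((deriv f (u z) : ℝ) : ℂ) * u3 z) := by
            rw [wdz_add _ _ (hA z) (hB z),
              wdz_mul _ _ ((d (contDiff_const.mul hfu) z).fun_mul (d hu1c z)) (d hu1c z),
              wdz_mul _ _ (d (contDiff_const.mul hfu) z) (d hu1c z),
              wdz_const_mul _ _ (d hfu z), efu z,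
              wdz_mul _ _ (d hdfu z) (d hu2c z), edfu z, ← hu2_def, ← hu3_def]
            ring
  -- step 4 : wdz of P
  have hwP : wdz (fun w => u3 w - Complex.ofReal (β / 2) * u1 w ^ 3)
      = fun w => wdz u3 w - 3 * Complex.ofReal (β / 2) * (u1 w * u1 w * u2 w) := by
    funext w
    have e3 : (fun w' => u3 w' - Complex.ofReal (β / 2) * u1 w' ^ 3)
        = fun w' => u3 w' - Complex.ofReal (β / 2) * (u1 w' * u1 w' * u1 w') := by
      funext w'; ring
    rw [e3, wdz_sub _ _ (d hu3c w)
        ((((d hu1c w).fun_mul (d hu1c w)).fun_mul (d hu1c w)).const_mul _),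
      wdz_const_mul _ _ (((d hu1c w).fun_mul (d hu1c w)).fun_mul (d hu1c w)),
      wdz_mul _ _ ((d hu1c w).fun_mul (d hu1c w)) (d hu1c w),
      wdz_mul _ _ (d hu1c w) (d hu1c w), ← hu2_def]
    ring
  -- assemble
  rw [hwP, wdzb_sub _ _ (d (contDiff_wdz hu3c) z)
      (((((d hu1c z).fun_mul (d hu1c z)).fun_mul (d hu2c z))).const_mul _),
    wdzb_const_mul _ _ (((d hu1c z).fun_mul (d hu1c z)).fun_mul (d hu2c z)),
    wdzb_mul _ _ ((d hu1c z).fun_mul (d hu1c z)) (d hu2c z),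
    wdzb_mul _ _ (d hu1c z) (d hu1c z),
    hwb4, hwb2 z, hpde z]
  push_cast
  ring
end

section
/- Let R be a commutative ring, D : R → R an additive map, and c_1, ..., c_{k+1} ∈ R. Define B^{ij} ∈ R for 1 ≤ i ≤ j by B^{ij} = Σ_{m=0}^{k-j-i+1} (-1)^{m-i+1} C(m+i-1, i-1) D^m(c_{m+j+i-1}) (empty sum if k-j-i+1 < 0). Then for all 1 < i ≤ j, the recursion B^{ij} + B^{i-1,j+1} + D(B^{i,j+1}) = 0 holds. -/
/-- The explicit formula for the coefficients B^{ij} of a conservation law in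
normal form: B^{ij} = Σ_{m=0}^{k-j-i+1} (-1)^{m-i+1} C(m+i-1, i-1) D^m(c_{m+j+i-1}),
with the empty sum when k-j-i+1 < 0 and the sign interpreted via the ℤ-action
(note (-1)^{m-i+1} = (-1)^{m+i+1} by parity). -/
def Bcoef {R : Type*} [CommRing R] (D : R → R) (c : ℕ → R) (k i j : ℕ) : R :=
  ∑ m ∈ Finset.range (k + 2 - j - i),
    (((-1 : ℤ) ^ (m + i + 1)) * (Nat.choose (m + i - 1) (i - 1) : ℤ)) •
      D^[m] (c (m + j + i - 1))

/-!
With `v m = D^m(c_{m+j+i-1})` and `w_i(m) = (-1)^{m+i+1} C(m+i-1, i-1)`, the three terms of the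
recursion are `∑_{m<n} w_i(m) v m`, `∑_{m<n} w_{i-1}(m) v m` (passing from `(i, j)` to
`(i-1, j+1)` leaves the index of `c` unchanged) and `∑_{m<n-1} w_i(m) v (m+1)`. So the total
coefficient of `v m` is `w_i(m) + w_{i-1}(m) + w_i(m-1)`, which vanishes by Pascal's rule.
-/

open Finset

def bcoefWeight (i m : ℕ) : ℤ :=
  (-1) ^ (m + i + 1) * ((m + i - 1).choose (i - 1) : ℤ)

theorem bcoefWeight_zero_add_bcoefWeight_zero {i : ℕ} (hi : 0 < i) :
    bcoefWeight i 0 + bcoefWeight (i - 1) 0 = 0 := by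
  obtain ⟨i, rfl⟩ : ∃ i', i = i' + 1 := ⟨i - 1, by omega⟩
  simp [bcoefWeight, pow_succ]

theorem bcoefWeight_succ_add_bcoefWeight_succ_add_bcoefWeight {i : ℕ} (hi : 1 < i) (m : ℕ) :
    bcoefWeight i (m + 1) + bcoefWeight (i - 1) (m + 1) + bcoefWeight i m = 0 := by
  obtain ⟨i, rfl⟩ : ∃ i', i = i' + 2 := ⟨i - 2, by omega⟩
  have pascal : (m + i + 2).choose (i + 1) = (m + i + 1).choose i + (m + i + 1).choose (i + 1) :=
    Nat.choose_succ_succ _ _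
  simp only [bcoefWeight, show m + 1 + (i + 2) - 1 = m + i + 2 by omega,
    show m + 1 + (i + 1) - 1 = m + i + 1 by omega, show m + (i + 2) - 1 = m + i + 1 by omega,
    show i + 2 - 1 = i + 1 from rfl, Nat.add_sub_cancel, pascal]
  push_cast
  ring

theorem sum_range_add_smul_add_sum_range_pred_smul_succ {S M : Type*} [Semiring S]
    [AddCommMonoid M] [Module S M] (f g : ℕ → S) (v : ℕ → M) (h₀ : f 0 + g 0 = 0)
    (hsucc : ∀ m, f (m + 1) + g (m + 1) + f m = 0) (n : ℕ) :
    ∑ m ∈ range n, (f m + g m) • v m + ∑ m ∈ range (n - 1), f m • v (m + 1) = 0 := by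
  cases n with
  | zero => simp
  | succ n =>
    induction n with
    | zero => simp [h₀]
    | succ n ih =>
      rw [Nat.add_sub_cancel] at ih ⊢
      rw [sum_range_succ (fun m => (f m + g m) • v m), sum_range_succ (fun m => f m • v (m + 1)),
        add_add_add_comm, ih, zero_add, ← add_smul, hsucc, zero_smul]

/-- The explicit formula for B^{ij} satisfies the structural recursion
B^{ij} + B^{i-1,j+1} + D(B^{i,j+1}) = 0 for 1 < i ≤ j. -/
theorem stmt9 {R : Type*} [CommRing R] (D : R → R)
    (hD : ∀ x y : R, D (x + y) = D x + D y)
    (c : ℕ → R) (k : ℕ) :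
    ∀ i j : ℕ, 1 < i → i ≤ j →
      Bcoef D c k i j + Bcoef D c k (i - 1) (j + 1) + D (Bcoef D c k i (j + 1)) = 0 := by
  intro i j hi _
  set n := k + 2 - j - i
  set v : ℕ → R := fun m => D^[m] (c (m + j + i - 1))
  have hB : Bcoef D c k i j = ∑ m ∈ range n, bcoefWeight i m • v m := rfl
  have hB' : Bcoef D c k (i - 1) (j + 1) = ∑ m ∈ range n, bcoefWeight (i - 1) m • v m := by
    rw [Bcoef, show k + 2 - (j + 1) - (i - 1) = n by omega]
    refine sum_congr rfl fun m _ => ?_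
    rw [show m + (j + 1) + (i - 1) - 1 = m + j + i - 1 by omega]
    rfl
  have hDB : D (Bcoef D c k i (j + 1)) = ∑ m ∈ range (n - 1), bcoefWeight i m • v (m + 1) := by
    rw [Bcoef, show k + 2 - (j + 1) - i = n - 1 by omega]
    refine (map_sum (AddMonoidHom.mk' D hD) _ _).trans (sum_congr rfl fun m _ => ?_)
    rw [map_zsmul, AddMonoidHom.mk'_apply, ← Function.iterate_succ_apply' D,
      show m + (j + 1) + i - 1 = m + 1 + j + i - 1 by omega]
    rfl
  rw [hB, hB', hDB, ← sum_add_distrib]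
  simp_rw [← add_smul]
  exact sum_range_add_smul_add_sum_range_pred_smul_succ _ _ v
    (bcoefWeight_zero_add_bcoefWeight_zero (by omega))
    (bcoefWeight_succ_add_bcoefWeight_succ_add_bcoefWeight hi) n
end

section
/- With B^{ij} defined by the explicit formula B^{ij} = Σ_{m=0}^{k-j-i+1} (-1)^{m-i+1} C(m+i-1, i-1) D^m(c_{m+j+i-1}) (R a commutative ring, D : R → R additive), whenever i + j = k + 1 one has B^{ij} = (-1)^{i+1}·c_k. In particular, if k + 1 = 2n is even and B^{nn} = 0 in R, and R is torsion-free (or 2 is not a zero divisor), then c_k = 0. -/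
theorem Bcoef_of_add_eq {R : Type*} [CommRing R] (D : R → R) (c : ℕ → R) {k i j : ℕ}
    (hij : i + j = k + 1) : Bcoef D c k i j = ((-1 : ℤ) ^ (i + 1)) • c k := by
  have h_range : k + 2 - j - i = 1 := by omega
  have h_index : j + i - 1 = k := by omega
  simp [Bcoef, h_range, h_index]

theorem neg_one_pow_zsmul_eq_zero_iff {M : Type*} [AddCommGroup M] (m : ℕ) {x : M} :
    ((-1 : ℤ) ^ m) • x = 0 ↔ x = 0 := by
  rcases neg_one_pow_eq_or ℤ m with h | h <;> simp [h]

theorem stmt10_general {R : Type*} [CommRing R] (D : R → R)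
    (c : ℕ → R) (k : ℕ) :
    (∀ i j : ℕ, 1 ≤ i → i + j = k + 1 →
        Bcoef D c k i j = ((-1 : ℤ) ^ (i + 1)) • c k)
    ∧ (∀ n : ℕ, 1 ≤ n → k + 1 = 2 * n → Bcoef D c k n n = 0 →
        (∀ x : R, 2 * x = 0 → x = 0) → c k = 0) := by
  refine ⟨fun i j _ hij => Bcoef_of_add_eq D c hij, fun n _ hk hB _ => ?_⟩
  rw [Bcoef_of_add_eq D c (by omega)] at hB
  exact (neg_one_pow_zsmul_eq_zero_iff (n + 1)).mp hB

/-- Whenever i + j = k + 1 one has B^{ij} = (-1)^{i+1}·c_k; in particular, if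
k + 1 = 2n, B^{nn} = 0 and 2 is not a zero divisor in R, then c_k = 0. -/
theorem stmt10 {R : Type*} [CommRing R] (D : R → R)
    (hD : ∀ x y : R, D (x + y) = D x + D y)
    (c : ℕ → R) (k : ℕ) :
    (∀ i j : ℕ, 1 ≤ i → i + j = k + 1 →
        Bcoef D c k i j = ((-1 : ℤ) ^ (i + 1)) • c k)
    ∧ (∀ n : ℕ, 1 ≤ n → k + 1 = 2 * n → Bcoef D c k n n = 0 →
        (∀ x : R, 2 * x = 0 → x = 0) → c k = 0) :=
  stmt10_general D c k
end

section
/- Define T^i recursively for a smooth function f(u) and formal variables u_0, u_1, ... by T^0 = f and T^{i+1} = Σ_{j=0}^{i} C(i,j)·u_{i-j}·∂T^j/∂u (where ∂/∂u denotes differentiation of the coefficient functions with respect to u). Then for all i, j ≥ 0: ∂T^{i+j+1}/∂u_j = C(i+j+1, i)·∂T^i/∂u. -/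
open MvPolynomial

/-- The coefficient ring C^∞-functions of u (modelled as all functions ℝ → ℝ,
with the relevant functions required smooth in the hypotheses). -/
abbrev SF : Type := ℝ → ℝ

/-- The ring R = C^∞(ℝ)[u₀, u₁, u₂, ...]: polynomials in the formal variables
u_j (j : ℕ) with function coefficients. -/
abbrev RR : Type := MvPolynomial ℕ SF

/-- The operator ∂/∂u, differentiating the coefficient functions. -/
noncomputable def du (p : RR) : RR :=
  ∑ m ∈ p.support, monomial m (deriv (MvPolynomial.coeff m p))

/-- The total derivative e₋₁ = u₀·∂/∂u + Σ_i u_{i+1}·∂/∂u_i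
(a finite sum on any polynomial). -/
noncomputable def eneg1 (p : RR) : RR :=
  X 0 * du p + ∑ i ∈ p.vars, X (i + 1) * pderiv i p

/-- T^j = (e₋₁)^j f. -/
noncomputable def Tf (f : SF) (j : ℕ) : RR := eneg1^[j] (MvPolynomial.C f)

/-- The recursively defined T^i: T⁰ = f, T^{i+1} = Σ_{j=0}^{i} C(i,j)·u_{i-j}·(T^j)_u. -/
noncomputable def Trec (f : SF) : ℕ → RR
  | 0 => MvPolynomial.C f
  | (i + 1) => ∑ j ∈ (Finset.range (i + 1)).attach,
      (Nat.choose i j.1 : RR) * (X (i - j.1) * du (Trec f j.1))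
  decreasing_by exact Finset.mem_range.mp j.2

/-- The operator Σ_{j≥0} T^j·∂/∂u_j = f·∂/∂u₀ + Σ_{j≥1} T^j·∂/∂u_j
(equal to -e_{-̄1} on polynomials in the u_j). -/
noncomputable def Ebar (f : SF) (p : RR) : RR :=
  ∑ j ∈ p.vars, Tf f j * pderiv j p

/-- Inclusion of ℝ[u₀, u₁, ...] (constant coefficients) into R. -/
noncomputable def constLift : MvPolynomial ℕ ℝ →+* RR :=
  MvPolynomial.map (algebraMap ℝ SF)

/-- Weighted degree of a monomial, determined by wd(u_j) = j + 1. -/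
def wdeg (m : ℕ →₀ ℕ) : ℕ := m.sum fun j e => e * (j + 1)

/-- The constant polynomial with constant value r. -/
noncomputable def Cc (r : ℝ) : RR := MvPolynomial.C (fun _ : ℝ => r)

/-! ### Auxiliary lemmas -/

lemma Trec_zero (f : SF) : Trec f 0 = MvPolynomial.C f := by rw [Trec]

lemma Trec_succ (f : SF) (i : ℕ) : Trec f (i + 1) = ∑ k ∈ Finset.range (i + 1),
    (Nat.choose i k : RR) * (X (i - k) * du (Trec f k)) := by
  rw [Trec]
  exact Finset.sum_attach (Finset.range (i + 1))
    (fun k => (Nat.choose i k : RR) * (X (i - k) * du (Trec f k)))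

lemma coeff_du (m : ℕ →₀ ℕ) (p : RR) : coeff m (du p) = deriv (coeff m p) := by
  classical
  unfold du
  rw [coeff_sum]
  simp only [coeff_monomial]
  rw [Finset.sum_ite_eq' p.support m (fun m' => deriv (coeff m' p))]
  by_cases h : m ∈ p.support
  · rw [if_pos h]
  · rw [if_neg h, MvPolynomial.notMem_support_iff.mp h]
    funext x; exact (deriv_const x 0).symm

lemma coeff_pderiv (i : ℕ) (m : ℕ →₀ ℕ) (p : RR) :
    coeff m (pderiv i p) = coeff (m + Finsupp.single i 1) p * (((m i + 1 : ℕ)) : SF) := by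
  classical
  conv_lhs => rw [p.as_sum]
  rw [map_sum, coeff_sum]
  simp only [pderiv_monomial, coeff_monomial]
  rw [Finset.sum_eq_single (m + Finsupp.single i 1)]
  · rw [if_pos (by rw [add_tsub_cancel_right])]
    congr 2
    simp [Finsupp.add_apply, Finsupp.single_eq_same]
  · intro b hb hne
    split_ifs with hsub
    · by_cases hbi : b i = 0
      · simp [hbi]
      · exfalso
        apply hne
        have hle : Finsupp.single i 1 ≤ b := by
          rw [Finsupp.single_le_iff]; omega
        rw [← hsub, tsub_add_cancel_of_le hle]
    · rfl
  · intro h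
    rw [MvPolynomial.notMem_support_iff.mp h]
    simp

/-- Smoothness of all coefficients of a polynomial. -/
def Sm (p : RR) : Prop := ∀ m, ContDiff ℝ (⊤ : ℕ∞) (coeff m p)

lemma contDiff_deriv {g : SF} (h : ContDiff ℝ (⊤ : ℕ∞) g) : ContDiff ℝ (⊤ : ℕ∞) (deriv g) := by
  have h' : ContDiff ℝ (((⊤ : ℕ∞) : WithTop ℕ∞) + 1) g := by
    rw [← WithTop.coe_one, ← WithTop.coe_add, top_add]; exact h
  exact (contDiff_succ_iff_deriv.mp h').2.2

lemma Sm_C {g : SF} (h : ContDiff ℝ (⊤ : ℕ∞) g) : Sm (MvPolynomial.C g) := by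
  intro m
  rw [coeff_C]
  split
  · exact h
  · exact contDiff_const

lemma Sm_add {p q : RR} (hp : Sm p) (hq : Sm q) : Sm (p + q) := by
  intro m
  rw [coeff_add]
  exact (hp m).add (hq m)

lemma Sm_zero : Sm (0 : RR) := by
  intro m
  rw [coeff_zero]
  exact contDiff_const

lemma Sm_sum {α : Type*} {s : Finset α} {g : α → RR} (h : ∀ a ∈ s, Sm (g a)) :
    Sm (∑ a ∈ s, g a) := by
  classical
  induction s using Finset.induction_on with
  | empty => simpa using Sm_zero
  | insert _ _ hx ih =>
    rw [Finset.sum_insert hx]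
    exact Sm_add (h _ (Finset.mem_insert_self _ _))
      (ih fun a ha => h a (Finset.mem_insert_of_mem ha))

lemma Sm_natCast_mul {p : RR} (n : ℕ) (hp : Sm p) : Sm ((n : RR) * p) := by
  intro m
  rw [← map_natCast (MvPolynomial.C : SF →+* RR) n, coeff_C_mul]
  exact contDiff_const.mul (hp m)

lemma Sm_X_mul {p : RR} (k : ℕ) (hp : Sm p) : Sm (X k * p) := by
  classical
  intro m
  rw [coeff_X_mul']
  split
  · exact hp _
  · exact contDiff_const

lemma Sm_du {p : RR} (hp : Sm p) : Sm (du p) := by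
  intro m
  rw [coeff_du]
  exact contDiff_deriv (hp m)

lemma du_zero : du 0 = 0 := by simp [du]

lemma du_add {p q : RR} (hp : Sm p) (hq : Sm q) : du (p + q) = du p + du q := by
  apply MvPolynomial.ext
  intro m
  rw [coeff_add, coeff_du, coeff_du, coeff_du, coeff_add]
  funext x
  exact deriv_add ((hp m).differentiable (by simp)).differentiableAt
    ((hq m).differentiable (by simp)).differentiableAt

lemma du_sum {α : Type*} {s : Finset α} {g : α → RR} (h : ∀ a ∈ s, Sm (g a)) :
    du (∑ a ∈ s, g a) = ∑ a ∈ s, du (g a) := by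
  classical
  induction s using Finset.induction_on with
  | empty => simpa using du_zero
  | insert _ _ hx ih =>
    rw [Finset.sum_insert hx, Finset.sum_insert hx,
      du_add (h _ (Finset.mem_insert_self _ _))
        (Sm_sum fun a ha => h a (Finset.mem_insert_of_mem ha)),
      ih fun a ha => h a (Finset.mem_insert_of_mem ha)]

lemma du_natCast_mul (n : ℕ) (p : RR) : du ((n : RR) * p) = (n : RR) * du p := by
  apply MvPolynomial.ext
  intro m
  rw [coeff_du, ← map_natCast (MvPolynomial.C : SF →+* RR) n, coeff_C_mul, coeff_C_mul, coeff_du]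
  funext x
  exact deriv_const_mul_field _

lemma du_X_mul (k : ℕ) (p : RR) : du (X k * p) = X k * du p := by
  classical
  apply MvPolynomial.ext
  intro m
  rw [coeff_du, coeff_X_mul', coeff_X_mul']
  split
  · rw [coeff_du]
  · funext x; exact deriv_const x 0

lemma pderiv_du (i : ℕ) (p : RR) : pderiv i (du p) = du (pderiv i p) := by
  apply MvPolynomial.ext
  intro m
  rw [coeff_pderiv, coeff_du, coeff_du, coeff_pderiv]
  funext x
  exact (deriv_mul_const_field _).symm

lemma Sm_trec (f : SF) (hf : ContDiff ℝ (⊤ : ℕ∞) f) : ∀ n, Sm (Trec f n) := by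
  intro n
  induction n using Nat.strong_induction_on with
  | _ n IH =>
    cases n with
    | zero => rw [Trec_zero]; exact Sm_C hf
    | succ i =>
      rw [Trec_succ]
      exact Sm_sum fun k hk =>
        Sm_natCast_mul _ (Sm_X_mul _ (Sm_du (IH k (Finset.mem_range.mp hk))))

lemma pderiv_trec_zero (f : SF) : ∀ n l, n ≤ l → pderiv l (Trec f n) = 0 := by
  intro n
  induction n using Nat.strong_induction_on with
  | _ n IH =>
    intro l hl
    cases n with
    | zero => rw [Trec_zero]; exact pderiv_C
    | succ i =>
      rw [Trec_succ, map_sum]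
      apply Finset.sum_eq_zero
      intro k hk
      have hk' : k < i + 1 := Finset.mem_range.mp hk
      rw [pderiv_mul, pderiv_mul]
      have h1 : pderiv l ((Nat.choose i k : RR)) = 0 := by
        rw [← map_natCast (MvPolynomial.C : SF →+* RR)]; exact pderiv_C
      have h2 : pderiv l (X (i - k) : RR) = 0 := pderiv_X_of_ne (by omega)
      have h3 : pderiv l (du (Trec f k)) = 0 := by
        rw [pderiv_du, IH k hk' l (by omega), du_zero]
      rw [h1, h2, h3]
      ring

lemma chooseid (a j l : ℕ) (hl : l ≤ a) :
    (a + 1 + j).choose (l + j + 1) * (l + j + 1).choose l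
      = (a + 1 + j).choose a * a.choose l := by
  have h1 : (l + j + 1).choose l * l.factorial * (j + 1).factorial = (l + j + 1).factorial := by
    have h := Nat.choose_mul_factorial_mul_factorial (show l ≤ l + j + 1 by omega)
    rwa [show l + j + 1 - l = j + 1 by omega] at h
  have h2 : (a + 1 + j).choose (l + j + 1) * (l + j + 1).factorial * (a - l).factorial
      = (a + 1 + j).factorial := by
    have h := Nat.choose_mul_factorial_mul_factorial (show l + j + 1 ≤ a + 1 + j by omega)
    rwa [show a + 1 + j - (l + j + 1) = a - l by omega] at h
  have h3 : (a + 1 + j).choose a * a.factorial * (j + 1).factorial = (a + 1 + j).factorial := by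
    have h := Nat.choose_mul_factorial_mul_factorial (show a ≤ a + 1 + j by omega)
    rwa [show a + 1 + j - a = j + 1 by omega] at h
  have h4 : a.choose l * l.factorial * (a - l).factorial = a.factorial :=
    Nat.choose_mul_factorial_mul_factorial hl
  have hpos : 0 < l.factorial * ((j + 1).factorial * (a - l).factorial) :=
    Nat.mul_pos (Nat.factorial_pos _) (Nat.mul_pos (Nat.factorial_pos _) (Nat.factorial_pos _))
  apply Nat.eq_of_mul_eq_mul_right hpos
  have L : ((a + 1 + j).choose (l + j + 1) * (l + j + 1).choose l)
      * (l.factorial * ((j + 1).factorial * (a - l).factorial)) = (a + 1 + j).factorial := by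
    calc ((a + 1 + j).choose (l + j + 1) * (l + j + 1).choose l)
          * (l.factorial * ((j + 1).factorial * (a - l).factorial))
        = (a + 1 + j).choose (l + j + 1)
            * ((l + j + 1).choose l * l.factorial * (j + 1).factorial) * (a - l).factorial := by
          ring
      _ = (a + 1 + j).choose (l + j + 1) * (l + j + 1).factorial * (a - l).factorial := by rw [h1]
      _ = (a + 1 + j).factorial := h2
  have R : ((a + 1 + j).choose a * a.choose l)
      * (l.factorial * ((j + 1).factorial * (a - l).factorial)) = (a + 1 + j).factorial := by
    calc ((a + 1 + j).choose a * a.choose l)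
          * (l.factorial * ((j + 1).factorial * (a - l).factorial))
        = (a + 1 + j).choose a * (a.choose l * l.factorial * (a - l).factorial)
            * (j + 1).factorial := by ring
      _ = (a + 1 + j).choose a * a.factorial * (j + 1).factorial := by rw [h4]
      _ = (a + 1 + j).factorial := h3
  rw [L, R]

/-- Lemma 2.1(2): ∂T^{i+j+1}/∂u_j = C(i+j+1, i)·∂T^i/∂u. -/
theorem stmt11 (f : SF) (hf : ContDiff ℝ (⊤ : ℕ∞) f) (i j : ℕ) :
    pderiv j (Trec f (i + j + 1)) = (Nat.choose (i + j + 1) i : RR) * du (Trec f i) := by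
  induction i using Nat.strong_induction_on with
  | _ i IH =>
  have hsm := Sm_trec f hf
  rw [Trec_succ, map_sum]
  have hterm : ∀ k, pderiv j ((Nat.choose (i + j) k : RR) * (X (i + j - k) * du (Trec f k)))
      = (Nat.choose (i + j) k : RR) * (pderiv j (X (i + j - k)) * du (Trec f k))
        + (Nat.choose (i + j) k : RR) * (X (i + j - k) * du (pderiv j (Trec f k))) := by
    intro k
    have h1 : pderiv j ((Nat.choose (i + j) k : RR)) = 0 := by
      rw [← map_natCast (MvPolynomial.C : SF →+* RR)]; exact pderiv_C
    rw [pderiv_mul, pderiv_mul, h1, pderiv_du]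
    ring
  simp only [hterm]
  rw [Finset.sum_add_distrib]
  have hA : ∑ k ∈ Finset.range (i + j + 1),
      (Nat.choose (i + j) k : RR) * (pderiv j (X (i + j - k)) * du (Trec f k))
      = (Nat.choose (i + j) i : RR) * du (Trec f i) := by
    rw [Finset.sum_eq_single i]
    · rw [show i + j - i = j by omega, pderiv_X_self, one_mul]
    · intro k hk hki
      have hk' : k < i + j + 1 := Finset.mem_range.mp hk
      rw [pderiv_X_of_ne (by omega)]
      ring
    · intro h
      exact absurd (Finset.mem_range.mpr (by omega)) h
  have hB : ∑ k ∈ Finset.range (i + j + 1),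
      (Nat.choose (i + j) k : RR) * (X (i + j - k) * du (pderiv j (Trec f k)))
      = ∑ l ∈ Finset.range i, (Nat.choose (i + j) (l + j + 1) : RR)
          * (X (i - 1 - l) * ((Nat.choose (l + j + 1) l : RR) * du (du (Trec f l)))) := by
    rw [show i + j + 1 = (j + 1) + i by ring, Finset.sum_range_add]
    have hz : ∑ k ∈ Finset.range (j + 1),
        (Nat.choose (i + j) k : RR) * (X (i + j - k) * du (pderiv j (Trec f k))) = 0 := by
      apply Finset.sum_eq_zero
      intro k hk
      have hk' : k ≤ j := Nat.lt_succ_iff.mp (Finset.mem_range.mp hk)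
      rw [pderiv_trec_zero f k j hk', du_zero, mul_zero, mul_zero]
    rw [hz, zero_add]
    apply Finset.sum_congr rfl
    intro l hl
    have hlo : l < i := Finset.mem_range.mp hl
    rw [show j + 1 + l = l + j + 1 by ring, show i + j - (l + j + 1) = i - 1 - l by omega,
      IH l hlo, du_natCast_mul]
  rw [hA, hB]
  cases i with
  | zero => simp
  | succ a =>
    have pascal : ((a + 1) + j + 1).choose (a + 1) = (a + 1 + j).choose a + (a + 1 + j).choose (a + 1) :=
      Nat.choose_succ_succ _ _
    rw [pascal]
    push_cast
    rw [add_mul]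
    have hdu : du (Trec f (a + 1)) = ∑ l ∈ Finset.range (a + 1),
        (Nat.choose a l : RR) * (X (a - l) * du (du (Trec f l))) := by
      rw [Trec_succ, du_sum (fun k hk => Sm_natCast_mul _ (Sm_X_mul _ (Sm_du (hsm k))))]
      apply Finset.sum_congr rfl
      intro l hl
      rw [du_natCast_mul, du_X_mul]
    have hBB : ∑ l ∈ Finset.range (a + 1), (Nat.choose (a + 1 + j) (l + j + 1) : RR)
          * (X (a - l) * ((Nat.choose (l + j + 1) l : RR) * du (du (Trec f l))))
        = ((a + 1 + j).choose a : RR) * du (Trec f (a + 1)) := by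
      rw [hdu, Finset.mul_sum]
      apply Finset.sum_congr rfl
      intro l hl
      have hla : l ≤ a := Nat.lt_succ_iff.mp (Finset.mem_range.mp hl)
      have hnat := chooseid a j l hla
      have hcast : ((a + 1 + j).choose (l + j + 1) : RR) * ((l + j + 1).choose l : RR)
          = ((a + 1 + j).choose a : RR) * (a.choose l : RR) := by
        exact_mod_cast congrArg (Nat.cast : ℕ → RR) hnat
      linear_combination (X (a - l) * du (du (Trec f l))) * hcast
    rw [hBB]
    ring
end
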